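/- Let R be a commutative ℚ-algebra and let f : F → G be a homomorphism of formal group laws over R whose linear coefficient is zero. Then f = 0. -/

import Mathlib

namespace FGL

variable {R : Type*} [CommRing R]

/-- `subst2 F a b` is the substitution `F(a,b)` of the power series `a`, `b`
(with zero constant term) into the two-variable power series `F`. -/
noncomputable def subst2 {σ : Type*} (F : MvPowerSeries (Fin 2) R)
    (a b : MvPowerSeries σ R) : MvPowerSeries σ R :=
  fun d =>
    ∑ ij ∈ Finset.range ((d.sum fun _ k => k) + 1) ×ˢ
        Finset.range ((d.sum fun _ k => k) + 1),
      MvPowerSeries.coeff (Finsupp.single 0 ij.1 + Finsupp.single 1 ij.2) F *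
        MvPowerSeries.coeff d (a ^ ij.1 * b ^ ij.2)

/-- `subst1 f G` is the substitution `f(G)` of the power series `G`
(with zero constant term) into the one-variable power series `f`. -/
noncomputable def subst1 {σ : Type*} (f : PowerSeries R) (G : MvPowerSeries σ R) :
    MvPowerSeries σ R :=
  fun d =>
    ∑ n ∈ Finset.range ((d.sum fun _ k => k) + 1),
      PowerSeries.coeff n f * MvPowerSeries.coeff d (G ^ n)

/-- Composition `f(g)` of one-variable power series (`g` with zero constant term). -/
noncomputable def pcomp (f g : PowerSeries R) : PowerSeries R := subst1 f g

/-- A formal group law over `R`: a two-variable power series `F(X,Y)` with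
`F(X,0) = X`, `F(0,Y) = Y`, `F(X,Y) = F(Y,X)` and `F(F(X,Y),Z) = F(X,F(Y,Z))`. -/
structure IsFGL (F : MvPowerSeries (Fin 2) R) : Prop where
  unit_left : subst2 F (MvPowerSeries.X 0) 0 = MvPowerSeries.X 0
  unit_right : subst2 F 0 (MvPowerSeries.X 1) = MvPowerSeries.X 1
  comm : subst2 F (MvPowerSeries.X 1) (MvPowerSeries.X 0) = F
  assoc : subst2 F (subst2 F (MvPowerSeries.X 0) (MvPowerSeries.X 1))
        (MvPowerSeries.X 2 : MvPowerSeries (Fin 3) R)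
      = subst2 F (MvPowerSeries.X 0) (subst2 F (MvPowerSeries.X 1) (MvPowerSeries.X 2))

/-- A homomorphism `f : F → G` of formal group laws: a one-variable power series with
zero constant term such that `f(F(X,Y)) = G(f(X), f(Y))`. -/
structure IsHom (F G : MvPowerSeries (Fin 2) R) (f : PowerSeries R) : Prop where
  const : PowerSeries.constantCoeff f = 0
  hom : subst1 f F =
    subst2 G (subst1 f (MvPowerSeries.X 0)) (subst1 f (MvPowerSeries.X 1))

/-- The coefficientwise Frobenius twist `F^{(p)}`. -/
noncomputable def frob (p : ℕ) (F : MvPowerSeries (Fin 2) R) : MvPowerSeries (Fin 2) R :=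
  fun d => (MvPowerSeries.coeff d F) ^ p

/-- The one-variable power series `F_Y(X,0)`, whose coefficient of `X^n` is the
coefficient of `X^n Y` in `F`. -/
noncomputable def FY0 (F : MvPowerSeries (Fin 2) R) : PowerSeries R :=
  PowerSeries.mk fun n =>
    MvPowerSeries.coeff (Finsupp.single 0 n + Finsupp.single 1 1) F

/-- The formal partial derivative `F_X(X,Y)` with respect to the first variable. -/
noncomputable def FX (F : MvPowerSeries (Fin 2) R) : MvPowerSeries (Fin 2) R :=
  fun d => ((d 0 + 1 : ℕ) : R) * MvPowerSeries.coeff (d + Finsupp.single 0 1) F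

/-- The `n`-series `[n]_F` of a formal group law, defined by `[0]_F = 0` and
`[n+1]_F(X) = F([n]_F(X), X)`. -/
noncomputable def nSeries (F : MvPowerSeries (Fin 2) R) : ℕ → PowerSeries R
  | 0 => 0
  | n + 1 => subst2 F (nSeries F n) PowerSeries.X

/-! Let `n ≥ 2` be the first index with `aₙ ≠ 0` in `f = ∑ aₖ Tᵏ`, and compare the coefficients
of `X^(n-1) Y` in `f(F(X,Y)) = G(f(X), f(Y))`. Since `F ≡ X + Y` modulo terms of degree `2`,
the left side contributes `n · aₙ`. On the right, every monomial `f(X)ⁱ f(Y)ʲ` either does not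
involve `Y` (`j = 0`) or is divisible by `Y²` (as `T² ∣ f`). Hence `n · aₙ = 0`, and `n` is
invertible in a `ℚ`-algebra. -/

open MvPowerSeries

theorem _root_.MvPowerSeries.order_pow_sub_pow_ge {σ : Type*} {a b : MvPowerSeries σ R}
    (ha : 1 ≤ a.order) (hb : 1 ≤ b.order) (hab : 2 ≤ (a - b).order) (k : ℕ) :
    (k + 1 : ℕ) ≤ (a ^ k - b ^ k).order := by
  induction k with
  | zero => simp
  | succ k ih =>
    have hbk : (k : ℕ∞) ≤ (b ^ k).order := by
      simpa using (nsmul_le_nsmul_right hb k).trans (le_order_pow k)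
    calc ((k + 1 + 1 : ℕ) : ℕ∞)
        ≤ min (1 + (k + 1 : ℕ) : ℕ∞) (2 + k) :=
          le_min (le_of_eq (by push_cast; ring)) (le_of_eq (by push_cast; ring))
      _ ≤ min (a * (a ^ k - b ^ k)).order ((a - b) * b ^ k).order :=
          min_le_min ((add_le_add ha ih).trans le_order_mul)
            ((add_le_add hab hbk).trans le_order_mul)
      _ ≤ (a * (a ^ k - b ^ k) + (a - b) * b ^ k).order := min_order_le_add
      _ = (a ^ (k + 1) - b ^ (k + 1)).order := congrArg order (by ring)

theorem _root_.MvPowerSeries.coeff_pow_eq_of_two_le_order_sub {σ : Type*}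
    {a b : MvPowerSeries σ R} (ha : 1 ≤ a.order) (hb : 1 ≤ b.order) (hab : 2 ≤ (a - b).order)
    {n : ℕ} {d : σ →₀ ℕ} (hd : d.degree = n) :
    coeff d (a ^ n) = coeff d (b ^ n) := by
  rw [← sub_eq_zero, ← map_sub]
  refine coeff_of_lt_order ?_
  rw [hd]
  exact (ENat.natCast_lt_natCast.2 n.lt_succ_self).trans_le (order_pow_sub_pow_ge ha hb hab n)

theorem one_le_order_X_add_X : 1 ≤ (X 0 + X 1 : MvPowerSeries (Fin 2) R).order :=
  one_le_order_iff_constCoeff_eq_zero.2 (by simp)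

theorem coeff_X_add_X_pow (k l : ℕ) :
    coeff (Finsupp.single 0 k + Finsupp.single 1 l)
      ((X 0 + X 1 : MvPowerSeries (Fin 2) R) ^ (k + l)) = (k + l).choose k := by
  classical
  rw [add_pow, map_sum, Finset.sum_eq_single k]
  · rw [← map_natCast (C (σ := Fin 2) (R := R)), coeff_mul_C, X_pow_eq, X_pow_eq,
      monomial_mul_monomial, Nat.add_sub_cancel_left, coeff_monomial, if_pos rfl, one_mul,
      one_mul]
  · intro i _ hi
    rw [← map_natCast (C (σ := Fin 2) (R := R)), coeff_mul_C, X_pow_eq, X_pow_eq,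
      monomial_mul_monomial, coeff_monomial, if_neg, zero_mul]
    intro h
    exact hi (by simpa using congrArg (fun d : Fin 2 →₀ ℕ => d 0) h.symm)
  · simp

theorem coeff_subst1 {σ : Type*} (f : PowerSeries R) (G : MvPowerSeries σ R) (d : σ →₀ ℕ) :
    coeff d (subst1 f G) =
      ∑ n ∈ Finset.range (d.degree + 1), PowerSeries.coeff n f * coeff d (G ^ n) :=
  rfl

theorem coeff_subst2 {σ : Type*} (F : MvPowerSeries (Fin 2) R) (a b : MvPowerSeries σ R)
    (d : σ →₀ ℕ) :
    coeff d (subst2 F a b) =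
      ∑ ij ∈ Finset.range (d.degree + 1) ×ˢ Finset.range (d.degree + 1),
        coeff (Finsupp.single 0 ij.1 + Finsupp.single 1 ij.2) F * coeff d (a ^ ij.1 * b ^ ij.2) :=
  rfl

theorem coeff_subst2_X_zero {σ : Type*} (F : MvPowerSeries (Fin 2) R) (s : σ) (m : ℕ) :
    coeff (Finsupp.single s m) (subst2 F (X s) 0) = coeff (Finsupp.single 0 m) F := by
  classical
  rw [coeff_subst2, Finset.sum_eq_single (m, 0)]
  · simp [coeff_X_pow]
  · rintro ⟨i, j⟩ _ hij
    rcases Nat.eq_zero_or_pos j with rfl | hj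
    · have hmi : m ≠ i := fun h => hij (by rw [h])
      simp [coeff_X_pow, (Finsupp.single_injective s).eq_iff, hmi]
    · simp [zero_pow hj.ne']
  · simp

theorem coeff_subst2_zero_X {σ : Type*} (F : MvPowerSeries (Fin 2) R) (s : σ) (m : ℕ) :
    coeff (Finsupp.single s m) (subst2 F 0 (X s)) = coeff (Finsupp.single 1 m) F := by
  classical
  rw [coeff_subst2, Finset.sum_eq_single (0, m)]
  · simp [coeff_X_pow]
  · rintro ⟨i, j⟩ _ hij
    rcases Nat.eq_zero_or_pos i with rfl | hi
    · have hmj : m ≠ j := fun h => hij (by rw [h])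
      simp [coeff_X_pow, (Finsupp.single_injective s).eq_iff, hmj]
    · simp [zero_pow hi.ne']
  · simp

theorem IsFGL.two_le_order_sub {F : MvPowerSeries (Fin 2) R} (hF : IsFGL F) :
    2 ≤ (F - (X 0 + X 1)).order := by
  classical
  refine le_order fun d hd => ?_
  rw [Finsupp.degree_eq_sum, Fin.sum_univ_two] at hd
  have hd : d 0 = 0 ∨ d 1 = 0 := by
    norm_cast at hd
    omega
  rcases hd with hd | hd
  · have hd : d = Finsupp.single 1 (d 1) := by
      ext i; fin_cases i <;> simp [hd]
    have h := congrArg (coeff (Finsupp.single 1 (d 1))) hF.unit_right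
    rw [coeff_subst2_zero_X] at h
    rw [hd]
    simp [h, coeff_X, Finsupp.single_eq_single_iff]
  · have hd : d = Finsupp.single 0 (d 0) := by
      ext i; fin_cases i <;> simp [hd]
    have h := congrArg (coeff (Finsupp.single 0 (d 0))) hF.unit_left
    rw [coeff_subst2_X_zero] at h
    rw [hd]
    simp [h, coeff_X, Finsupp.single_eq_single_iff]

theorem IsFGL.one_le_order {F : MvPowerSeries (Fin 2) R} (hF : IsFGL F) : 1 ≤ F.order := by
  simpa using (le_min one_le_order_X_add_X (one_le_two.trans hF.two_le_order_sub)).trans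
    min_order_le_add

theorem IsFGL.coeff_pow_eq_coeff_X_add_X_pow {F : MvPowerSeries (Fin 2) R} (hF : IsFGL F)
    {n : ℕ} {d : Fin 2 →₀ ℕ} (hd : d.degree = n) :
    coeff d (F ^ n) = coeff d ((X 0 + X 1) ^ n) :=
  coeff_pow_eq_of_two_le_order_sub hF.one_le_order one_le_order_X_add_X hF.two_le_order_sub hd

theorem coeff_subst1_of_forall_lt {σ : Type*} {f : PowerSeries R} {n : ℕ}
    (hf : ∀ k < n, PowerSeries.coeff k f = 0) (G : MvPowerSeries σ R) {d : σ →₀ ℕ}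
    (hd : d.degree = n) :
    coeff d (subst1 f G) = PowerSeries.coeff n f * coeff d (G ^ n) := by
  rw [coeff_subst1, hd, Finset.sum_range_succ, Finset.sum_eq_zero, zero_add]
  intro k hk
  rw [hf k (Finset.mem_range.1 hk), zero_mul]

theorem subst1_X_eq_rename {σ : Type*} (f : PowerSeries R) (s : σ) :
    subst1 f (X s) = rename (fun _ : Unit => s) f := by
  classical
  ext d
  rw [coeff_subst1]
  simp_rw [coeff_X_pow, mul_ite, mul_one, mul_zero]
  by_cases hd : d ∈ Set.range (Finsupp.mapDomain fun _ : Unit => s)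
  · obtain ⟨x, rfl⟩ := hd
    obtain ⟨k, rfl⟩ : ∃ k, x = Finsupp.single () k := ⟨x (), Finsupp.unique_single x⟩
    rw [Finsupp.mapDomain_single, Finsupp.degree_single]
    simp_rw [(Finsupp.single_injective s).eq_iff]
    rw [Finset.sum_ite_eq, if_pos (Finset.self_mem_range_succ k)]
    have h := coeff_embDomain_rename (Function.Embedding.punit s) f (Finsupp.single () k)
    rw [Finsupp.embDomain_single] at h
    exact h.symm
  · rw [coeff_rename_eq_zero _ _ hd]
    refine Finset.sum_eq_zero fun k _ => if_neg ?_
    rintro rfl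
    exact hd ⟨Finsupp.single () k, Finsupp.mapDomain_single⟩

theorem X_pow_dvd_subst1_X {σ : Type*} {f : PowerSeries R} {k : ℕ}
    (hf : PowerSeries.X ^ k ∣ f) (s : σ) : X s ^ k ∣ subst1 f (X s) := by
  rw [subst1_X_eq_rename, ← rename_X (fun _ : Unit => s) (), ← map_pow]
  exact map_dvd _ hf

theorem coeff_subst2_subst1_X_eq_zero (G : MvPowerSeries (Fin 2) R) {f : PowerSeries R}
    (hf : PowerSeries.X ^ 2 ∣ f) (m : ℕ) :
    coeff (Finsupp.single 0 m + Finsupp.single 1 1)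
      (subst2 G (subst1 f (X 0)) (subst1 f (X 1)) : MvPowerSeries (Fin 2) R) = 0 := by
  rw [coeff_subst2]
  refine Finset.sum_eq_zero fun ⟨i, j⟩ _ => mul_eq_zero_of_right _ ?_
  cases j with
  | zero =>
    rw [pow_zero, mul_one, subst1_X_eq_rename, ← map_pow]
    refine coeff_rename_eq_zero _ _ fun ⟨x, hx⟩ => ?_
    simpa [Finsupp.mapDomain_of_notMem_range] using congrArg (· 1) hx
  | succ j =>
    have hdvd : (X 1 : MvPowerSeries (Fin 2) R) ^ 2 ∣
        subst1 f (X 0) ^ i * subst1 f (X 1) ^ (j + 1) :=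
      dvd_mul_of_dvd_right
        ((X_pow_dvd_subst1_X hf 1).trans (dvd_pow_self _ j.succ_ne_zero)) _
    exact X_pow_dvd_iff.mp hdvd (Finsupp.single 0 m + Finsupp.single 1 1 : Fin 2 →₀ ℕ)
      (by simp)

theorem IsHom.coeff_eq_zero_of_forall_lt [Algebra ℚ R] {F G : MvPowerSeries (Fin 2) R}
    {f : PowerSeries R} (hF : IsFGL F) (hf : IsHom F G f) {n : ℕ} (hn : 2 ≤ n)
    (hlt : ∀ k < n, PowerSeries.coeff k f = 0) :
    PowerSeries.coeff n f = 0 := by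
  obtain ⟨m, rfl⟩ : ∃ m, n = m + 1 + 1 := ⟨n - 2, by omega⟩
  have hX2 : PowerSeries.X ^ 2 ∣ f := PowerSeries.X_pow_dvd_iff.2 fun k hk => hlt k (by omega)
  have hd : (Finsupp.single 0 (m + 1) + Finsupp.single 1 1 : Fin 2 →₀ ℕ).degree =
      m + 1 + 1 := by
    simp
  have key := congrArg (coeff (Finsupp.single 0 (m + 1) + Finsupp.single 1 1)) hf.hom
  rw [coeff_subst1_of_forall_lt hlt F hd, hF.coeff_pow_eq_coeff_X_add_X_pow hd, coeff_X_add_X_pow,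
    Nat.choose_succ_self_right, coeff_subst2_subst1_X_eq_zero G hX2] at key
  have hunit : IsUnit ((m + 1 + 1 : ℕ) : R) := by
    simpa using ((Nat.cast_ne_zero (R := ℚ)).2 (m + 1).succ_ne_zero).isUnit.map (algebraMap ℚ R)
  exact hunit.mul_left_eq_zero.1 key

theorem statement3_general (R : Type*) [CommRing R] [Algebra ℚ R]
    (F G : MvPowerSeries (Fin 2) R) (hF : IsFGL F)
    (f : PowerSeries R) (hf : IsHom F G f) (hf1 : PowerSeries.coeff 1 f = 0) :
    f = 0 := by
  ext n
  induction n using Nat.strong_induction_on with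
  | _ n ih =>
    match n with
    | 0 => simpa using hf.const
    | 1 => simpa using hf1
    | n + 2 => simpa using hf.coeff_eq_zero_of_forall_lt hF (by omega) ih

/-- Over a commutative `ℚ`-algebra, a homomorphism of formal group laws with vanishing
linear coefficient is zero. -/
theorem statement3 (R : Type*) [CommRing R] [Algebra ℚ R]
    (F G : MvPowerSeries (Fin 2) R) (hF : IsFGL F) (hG : IsFGL G)
    (f : PowerSeries R) (hf : IsHom F G f) (hf1 : PowerSeries.coeff 1 f = 0) :
    f = 0 :=
  statement3_general R F G hF f hf hf1

end FGL
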